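/- For every positive integer n and real σ with 0 < σ < 1, ∫₁^∞ |f_n(x)|·x^(−σ−1) dx ≤ (η(σ)/σ)·∑_{k=1}^n |μ(k)|/k^σ, where f_n(x) = ∑_{k=1}^n μ(k)·ν(x/k) and η(σ) = ∑_{k=1}^∞ ((2k−1)^(−σ) − (2k)^(−σ)). -/

import Mathlib

open MeasureTheory

noncomputable def nu (x : ℝ) : ℝ := 2 * Int.fract (x / 2) - Int.fract x

noncomputable def fn (n : ℕ) (x : ℝ) : ℝ :=
  ∑ k ∈ Finset.Icc 1 n, (ArithmeticFunction.moebius k : ℝ) * nu (x / k)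

noncomputable def etaR (σ : ℝ) : ℝ :=
  ∑' k : ℕ, ((2 * ((k : ℝ) + 1) - 1) ^ (-σ) - (2 * ((k : ℝ) + 1)) ^ (-σ))

/-!
Since `0 ≤ ν ≤ 1`, `|f_n(x)| ≤ ∑ |μ(k)| ν(x/k)`, so it suffices to compute each
`∫₁^∞ ν(x/k) x^(-σ-1) dx`. As `ν(x/k)` vanishes for `0 < x < k`, this is the integral over
`(0, ∞)`, which the substitution `x ↦ k x` turns into `k^(-σ) ∫₀^∞ ν(x) x^(-σ-1) dx`.
On `(0, ∞)`, `ν` is the indicator of the union of the intervals `[2k+1, 2k+2)`, and summing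
`∫_{2k+1}^{2k+2} x^(-σ-1) dx = ((2k+1)^(-σ) - (2k+2)^(-σ)) / σ` gives `η(σ) / σ`.
-/

open Set

lemma nu_eq_floor_emod_two (x : ℝ) : nu x = (⌊x⌋ % 2 : ℤ) := by
  have h : ⌊x / 2⌋ = ⌊x⌋ / 2 := by exact_mod_cast Int.floor_div_natCast x 2
  rw [nu, Int.fract, Int.fract, h, Int.emod_def]
  push_cast
  ring

lemma nu_nonneg (x : ℝ) : 0 ≤ nu x := by
  rw [nu_eq_floor_emod_two]
  exact_mod_cast Int.emod_nonneg _ two_ne_zero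

lemma nu_le_one (x : ℝ) : nu x ≤ 1 := by
  rw [nu_eq_floor_emod_two]
  exact_mod_cast Int.lt_add_one_iff.1 (Int.emod_lt_of_pos ⌊x⌋ two_pos)

@[fun_prop]
lemma measurable_nu : Measurable nu := by
  unfold nu
  fun_prop

lemma nu_div_eq_zero {x c : ℝ} (hx : 0 ≤ x) (hxc : x < c) : nu (x / c) = 0 := by
  have hc : 0 < c := hx.trans_lt hxc
  have h : ⌊x / c⌋ = 0 := Int.floor_eq_zero_iff.2 ⟨div_nonneg hx hc.le, (div_lt_one hc).2 hxc⟩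
  simp [nu_eq_floor_emod_two, h]

def oddBlock (k : ℕ) : Set ℝ := Ico (2 * k + 1) (2 * k + 2)

lemma mem_oddBlock_iff {k : ℕ} {x : ℝ} : x ∈ oddBlock k ↔ ⌊x⌋ = 2 * k + 1 := by
  rw [Int.floor_eq_iff, oddBlock, mem_Ico]
  push_cast
  ring_nf

lemma pairwise_disjoint_oddBlock : Pairwise (Function.onFun Disjoint oddBlock) := by
  intro i j hij
  refine disjoint_left.2 fun x hi hj => hij ?_
  have := (mem_oddBlock_iff.1 hi).symm.trans (mem_oddBlock_iff.1 hj)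
  omega

lemma nu_eq_indicator_oddBlock {x : ℝ} (hx : 0 ≤ x) :
    nu x = (⋃ k, oddBlock k).indicator 1 x := by
  have hmem : x ∈ ⋃ k, oddBlock k ↔ ∃ k : ℕ, ⌊x⌋ = 2 * k + 1 := by
    simp only [mem_iUnion, mem_oddBlock_iff]
  have h0 : 0 ≤ ⌊x⌋ := Int.floor_nonneg.2 hx
  rw [nu_eq_floor_emod_two]
  by_cases h : ∃ k : ℕ, ⌊x⌋ = 2 * k + 1
  · obtain ⟨k, hk⟩ := h
    rw [indicator_of_mem (hmem.2 ⟨k, hk⟩), hk]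
    norm_num [Int.add_mul_emod_self_left]
  · have : ⌊x⌋ % 2 = 0 := by
      by_contra hodd
      exact h ⟨(⌊x⌋ / 2).toNat, by omega⟩
    rw [indicator_of_notMem (mt hmem.1 h), this]
    exact Int.cast_zero

lemma integral_Ico_rpow_neg_sub_one {a b σ : ℝ} (ha : 0 < a) (hab : a ≤ b) (hσ : σ ≠ 0) :
    ∫ x in Ico a b, x ^ (-σ - 1) = (a ^ (-σ) - b ^ (-σ)) / σ := by
  have h0 : (0 : ℝ) ∉ uIcc a b := by
    rw [uIcc_of_le hab]
    exact fun h => ha.not_ge h.1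
  rw [integral_Ico_eq_integral_Ioo, ← integral_Ioc_eq_integral_Ioo,
    ← intervalIntegral.integral_of_le hab,
    integral_rpow (Or.inr ⟨by contrapose! hσ; linarith, h0⟩), sub_add_cancel]
  field_simp
  ring

lemma integral_nu_mul_rpow {σ : ℝ} (hσ : 0 < σ) :
    ∫ x in Ioi 0, nu x * x ^ (-σ - 1) = etaR σ / σ := by
  have hsub : ⋃ k, oddBlock k ⊆ Ici 1 := iUnion_subset fun k x hx => by
    have := hx.1
    simp only [mem_Ici]
    linarith [(Nat.cast_nonneg k : (0 : ℝ) ≤ k)]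
  have hmeas : MeasurableSet (⋃ k, oddBlock k) := MeasurableSet.iUnion fun _ => measurableSet_Ico
  have hint : IntegrableOn (fun x : ℝ => x ^ (-σ - 1)) (⋃ k, oddBlock k) := by
    refine ((integrableOn_Ici_iff_integrableOn_Ioi (by simp)).2 ?_).mono_set hsub
    exact integrableOn_Ioi_rpow_of_lt (by linarith) zero_lt_one
  calc ∫ x in Ioi 0, nu x * x ^ (-σ - 1)
      = ∫ x in Ioi 0, (⋃ k, oddBlock k).indicator (fun x => x ^ (-σ - 1)) x := by
        refine setIntegral_congr_fun measurableSet_Ioi fun x hx => ?_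
        rw [nu_eq_indicator_oddBlock (le_of_lt hx)]
        simp only [indicator]
        split_ifs <;> simp
    _ = ∫ x in ⋃ k, oddBlock k, x ^ (-σ - 1) := by
        rw [integral_indicator hmeas, Measure.restrict_restrict hmeas, inter_eq_left.2 (hsub.trans (Ici_subset_Ioi.2 one_pos))]
    _ = ∑' k : ℕ, ∫ x in oddBlock k, x ^ (-σ - 1) :=
        integral_iUnion (fun _ => measurableSet_Ico) pairwise_disjoint_oddBlock hint
    _ = etaR σ / σ := by
        rw [etaR, ← tsum_div_const]
        refine tsum_congr fun k => ?_
        rw [oddBlock, integral_Ico_rpow_neg_sub_one (by positivity) (by linarith) hσ.ne']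
        ring_nf

lemma integral_comp_div_mul_rpow (g : ℝ → ℝ) {c : ℝ} (hc : 0 < c) (s : ℝ) :
    ∫ x in Ioi 0, g (x / c) * x ^ s = c ^ (s + 1) * ∫ x in Ioi 0, g x * x ^ s := by
  have h := integral_comp_mul_left_Ioi (fun x => g (x / c) * x ^ s) 0 hc
  have hscale : ∫ x in Ioi 0, g (c * x / c) * (c * x) ^ s = c ^ s * ∫ x in Ioi 0, g x * x ^ s := by
    rw [← integral_const_mul]
    refine setIntegral_congr_fun measurableSet_Ioi fun x hx => ?_
    rw [mul_div_cancel_left₀ _ hc.ne', Real.mul_rpow hc.le (le_of_lt hx)]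
    ring
  rw [mul_zero, smul_eq_mul, hscale, eq_inv_mul_iff_mul_eq₀ hc.ne'] at h
  rw [← h, Real.rpow_add_one hc.ne']
  ring

lemma integrableOn_nu_div_mul_rpow {σ : ℝ} (hσ : 0 < σ) (c : ℝ) :
    IntegrableOn (fun x => nu (x / c) * x ^ (-σ - 1)) (Ioi 1) := by
  refine (integrableOn_Ioi_rpow_of_lt (by linarith : -σ - 1 < -1) zero_lt_one).mono' (by fun_prop) ?_
  filter_upwards [ae_restrict_mem measurableSet_Ioi] with x hx
  have hpow : 0 ≤ x ^ (-σ - 1) := Real.rpow_nonneg (zero_le_one.trans (le_of_lt hx)) _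
  rw [norm_mul, Real.norm_of_nonneg (nu_nonneg _), Real.norm_of_nonneg hpow]
  exact mul_le_of_le_one_left hpow (nu_le_one _)

lemma integral_Ioi_one_nu_div_mul_rpow {σ c : ℝ} (hσ : 0 < σ) (hc : 1 ≤ c) :
    ∫ x in Ioi 1, nu (x / c) * x ^ (-σ - 1) = c ^ (-σ) * (etaR σ / σ) := by
  rw [← integral_Ici_eq_integral_Ioi, ← setIntegral_eq_of_subset_of_forall_sdiff_eq_zero
    measurableSet_Ioi (Ici_subset_Ioi.2 one_pos) fun x hx => ?_,
    integral_comp_div_mul_rpow _ (by linarith) , integral_nu_mul_rpow hσ, sub_add_cancel]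
  have hx1 : x < 1 := by simpa using hx.2
  rw [nu_div_eq_zero (le_of_lt hx.1) (by linarith), zero_mul]

lemma abs_fn_le (n : ℕ) (x : ℝ) :
    |fn n x| ≤ ∑ k ∈ Finset.Icc 1 n, |(ArithmeticFunction.moebius k : ℝ)| * nu (x / k) :=
  (Finset.abs_sum_le_sum_abs _ _).trans_eq <| Finset.sum_congr rfl fun k _ => by
    rw [abs_mul, abs_of_nonneg (nu_nonneg _)]

theorem stmt_17 : ∀ n : ℕ, 0 < n → ∀ σ : ℝ, 0 < σ → σ < 1 →
    ∫ x in Set.Ioi (1 : ℝ), |fn n x| * x ^ (-σ - 1) ≤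
      (etaR σ / σ) * ∑ k ∈ Finset.Icc 1 n, |(ArithmeticFunction.moebius k : ℝ)| / (k : ℝ) ^ σ := by
  intro n _ σ hσ _
  set w : ℕ → ℝ := fun k => |(ArithmeticFunction.moebius k : ℝ)|
  have hint : ∀ k ∈ Finset.Icc 1 n,
      IntegrableOn (fun x => w k * (nu (x / k) * x ^ (-σ - 1))) (Ioi 1) :=
    fun k _ => (integrableOn_nu_div_mul_rpow hσ k).const_mul _
  calc ∫ x in Ioi 1, |fn n x| * x ^ (-σ - 1)
      ≤ ∫ x in Ioi 1, ∑ k ∈ Finset.Icc 1 n, w k * (nu (x / k) * x ^ (-σ - 1)) := by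
        refine integral_mono_of_nonneg ?_ (integrable_finsetSum _ hint) ?_ <;>
          filter_upwards [ae_restrict_mem measurableSet_Ioi] with x hx
        · exact mul_nonneg (abs_nonneg _) (Real.rpow_nonneg (zero_le_one.trans (le_of_lt hx)) _)
        · simp only [← mul_assoc, ← Finset.sum_mul]
          exact mul_le_mul_of_nonneg_right (abs_fn_le n x)
            (Real.rpow_nonneg (zero_le_one.trans (le_of_lt hx)) _)
    _ = ∑ k ∈ Finset.Icc 1 n, w k * ((k : ℝ) ^ (-σ) * (etaR σ / σ)) := by
        rw [integral_finsetSum _ hint]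
        refine Finset.sum_congr rfl fun k hk => ?_
        rw [integral_const_mul, integral_Ioi_one_nu_div_mul_rpow hσ
          (Nat.one_le_cast.2 (Finset.mem_Icc.1 hk).1)]
    _ = (etaR σ / σ) * ∑ k ∈ Finset.Icc 1 n, w k / (k : ℝ) ^ σ := by
        rw [Finset.mul_sum]
        refine Finset.sum_congr rfl fun k _ => ?_
        rw [Real.rpow_neg (Nat.cast_nonneg k)]
        ring
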